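/- Let R be a positively SG left Noetherian ring and J a compatible SG ideal of R. Fix n, t ∈ ℕ and set I = (R_{≥t})^n, and let j : I/JI → R/J be the R/J-linear map induced by the inclusion I ⊆ R (sending x + JI to x + J). Then the cokernel of j is a torsion left R/J-module; and if moreover J satisfies condition (*), then the kernel of j is a torsion left R/J-module (torsion of R/J-modules being defined via the ideals (R/J)_{≥t}). -/

import Mathlib

open Pointwise

namespace SG

/-- A semi-graded ring: an internal direct sum decomposition `R = ⊕ₙ Rₙ` into additive
subgroups with `Rₘ·Rₙ ⊆ ⊕_{k ≤ m+n} R_k` and `1 ∈ R₀`. -/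
def IsSGRing {R : Type*} [Ring R] (g : ℤ → AddSubgroup R) : Prop :=
  DirectSum.IsInternal g ∧
    (∀ m n : ℤ, ∀ a ∈ g m, ∀ b ∈ g n, a * b ∈ ⨆ k ≤ m + n, g k) ∧
    (1 : R) ∈ g 0

/-- A semi-graded module over a semi-graded ring. -/
def IsSGModule {R M : Type*} [Ring R] [AddCommGroup M] [Module R M]
    (gR : ℤ → AddSubgroup R) (gM : ℤ → AddSubgroup M) : Prop :=
  DirectSum.IsInternal gM ∧
    ∀ m n : ℤ, 0 ≤ m → ∀ r ∈ gR m, ∀ x ∈ gM n, r • x ∈ ⨆ k ≤ m + n, gM k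

/-- A submodule `P` is a semi-graded submodule when `P = ⊕ₙ (Mₙ ⊓ P)`. -/
def IsSGSubmodule {R M : Type*} [Ring R] [AddCommGroup M] [Module R M]
    (gM : ℤ → AddSubgroup M) (P : Submodule R M) : Prop :=
  P.toAddSubgroup = ⨆ n : ℤ, (gM n ⊓ P.toAddSubgroup)

/-- `⟨X⟩^SG`: the intersection of all semi-graded submodules containing `X`. -/
def sgSpan {R M : Type*} [Ring R] [AddCommGroup M] [Module R M]
    (gM : ℤ → AddSubgroup M) (X : Set M) : Submodule R M :=
  sInf {P : Submodule R M | IsSGSubmodule gM P ∧ X ⊆ P}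

/-- A (left) ideal is two-sided. -/
def IsTwoSided {R : Type*} [Ring R] (I : Ideal R) : Prop :=
  ∀ x ∈ I, ∀ r : R, x * r ∈ I

/-- `R_{≥t}`: the intersection of all two-sided semi-graded ideals containing `⊕_{k ≥ t} R_k`. -/
def geIdeal {R : Type*} [Ring R] (gR : ℤ → AddSubgroup R) (t : ℕ) : Ideal R :=
  sInf {I : Ideal R | IsSGSubmodule gR I ∧ IsTwoSided I ∧
    ∀ k : ℤ, (t : ℤ) ≤ k → gR k ≤ I.toAddSubgroup}

/-- Powers of a (two-sided) ideal, `I⁰ = R`, `I^{n+1} = I·Iⁿ`. -/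
def idealPow {R : Type*} [Ring R] (I : Ideal R) : ℕ → Ideal R
  | 0 => ⊤
  | n + 1 => Submodule.span R ((I : Set R) * (idealPow I n : Set R))

/-- `x` is a torsion element: `(R_{≥t})ⁿ • x = 0` for some `n, t ∈ ℕ`. -/
def IsTorsionElem {R : Type*} [Ring R] (gR : ℤ → AddSubgroup R)
    {M : Type*} [AddCommGroup M] [Module R M] (x : M) : Prop :=
  ∃ t n : ℕ, ∀ y ∈ idealPow (geIdeal gR t) n, y • x = 0

/-- `R'_n`. -/
def RprimeN {R : Type*} [Ring R] (gR : ℤ → AddSubgroup R) (n : ℤ) : Set R :=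
  {r : R | r ∈ gR n ∧ ∀ m : ℤ, ∀ h ∈ gR m, r * h ∈ gR (n + m)}

/-- `R' = ⋃ₙ R'_n`. -/
def Rprime {R : Type*} [Ring R] (gR : ℤ → AddSubgroup R) : Set R :=
  ⋃ n : ℤ, RprimeN gR n

/-- `R''_n`. -/
def RdprimeN {R : Type*} [Ring R] (gR : ℤ → AddSubgroup R) (n : ℤ) : Set R :=
  {r : R | r ∈ RprimeN gR n ∧ ∀ m : ℤ, ∀ h ∈ gR m, h * r ∈ gR (n + m)}

/-- `R'' = ⋃ₙ R''_n`. -/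
def Rdprime {R : Type*} [Ring R] (gR : ℤ → AddSubgroup R) : Set R :=
  ⋃ n : ℤ, RdprimeN gR n

/-- A multiplicatively closed set satisfying the left Ore condition. -/
def IsLeftOreSet {R : Type*} [Ring R] (T : Set R) : Prop :=
  (1 : R) ∈ T ∧ (∀ a ∈ T, ∀ b ∈ T, a * b ∈ T) ∧
    ∀ r : R, ∀ s ∈ T, ∃ r' : R, ∃ s' ∈ T, s' * r = r' * s

/-- A good left Ore set. -/
def IsGoodOre {R : Type*} [Ring R] (gR : ℤ → AddSubgroup R) (T : Set R) : Prop :=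
  IsLeftOreSet T ∧ T ⊆ Rdprime gR ∧
    ∀ s ∈ T, ∀ r ∈ Rprime gR, ∃ u ∈ Rprime gR, ∃ v ∈ T, u * s = v * r

/-- A (left) schematic semi-graded ring: positively semi-graded, left Noetherian, with a
finite family of non-trivial good left Ore sets satisfying the schematic condition. -/
def IsSchematic {R : Type*} [Ring R] (gR : ℤ → AddSubgroup R) : Prop :=
  IsSGRing gR ∧ (∀ n : ℤ, n < 0 → gR n = ⊥) ∧ IsNoetherian R R ∧
    ∃ 𝒮 : Set (Set R), 𝒮.Finite ∧
      (∀ T ∈ 𝒮, IsGoodOre gR T ∧ ∃ x ∈ T, x ∈ ⨆ k ≥ (1 : ℤ), gR k) ∧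
      ∀ xf : Set R → R, (∀ T ∈ 𝒮, xf T ∈ T) →
        ∃ t m : ℕ, (idealPow (geIdeal gR t) m : Set R) ⊆
          ↑(⨆ T ∈ 𝒮, Ideal.span {xf T})

/-- `f^!(M)`: the largest semi-graded submodule of `M` annihilated by `J`, realized as the
sum of all semi-graded submodules annihilated by `J`. -/
def fShriek {R M : Type*} [Ring R] [AddCommGroup M] [Module R M]
    (gM : ℤ → AddSubgroup M) (J : Ideal R) : Submodule R M :=
  sSup {P : Submodule R M | IsSGSubmodule gM P ∧ ∀ j ∈ J, ∀ x ∈ P, j • x = 0}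

/-- The induced semigraduation on a quotient module. -/
def quotGrade {R M : Type*} [Ring R] [AddCommGroup M] [Module R M]
    (gM : ℤ → AddSubgroup M) (K : Submodule R M) : ℤ → AddSubgroup (M ⧸ K) :=
  fun n => (gM n).map (K.mkQ : M →ₗ[R] M ⧸ K).toAddMonoidHom

/-- Condition (*) on an ideal `J`. -/
def CondStar {R : Type*} [Ring R] (gR : ℤ → AddSubgroup R) (J : Ideal R) : Prop :=
  ∀ n t : ℕ, ∀ x ∈ J ⊓ idealPow (geIdeal gR t) n,
    ∃ nx tx : ℕ, ∀ y ∈ idealPow (geIdeal gR tx) nx,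
      y * x ∈ Submodule.span R ((J : Set R) * (idealPow (geIdeal gR t) n : Set R))

/-- Localizable semi-graded module: `R'_n · M_m ⊆ M_{n+m}`. -/
def IsLSG {R M : Type*} [Ring R] [AddCommGroup M] [Module R M]
    (gR : ℤ → AddSubgroup R) (gM : ℤ → AddSubgroup M) : Prop :=
  IsSGModule gR gM ∧
    ∀ n m : ℤ, ∀ r ∈ RprimeN gR n, ∀ x ∈ gM m, r • x ∈ gM (n + m)

universe v

/-- `E` is T-injective (in the category of all modules): maps into `E` from a submodule with
torsion quotient extend. -/
def TInjective {R : Type*} [Ring R] (gR : ℤ → AddSubgroup R)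
    (E : Type*) [AddCommGroup E] [Module R E] : Prop :=
  ∀ (M : Type v) [AddCommGroup M] [Module R M] (P : Submodule R M),
    (∀ x : M ⧸ P, IsTorsionElem gR x) →
      ∀ f : P →ₗ[R] E, ∃ g : M →ₗ[R] E, ∀ x : P, g (x : M) = f x

/-- `E` is T-injective within the category of LSG modules and homogeneous maps. -/
def TInjectiveLSG {R : Type*} [Ring R] (gR : ℤ → AddSubgroup R)
    {E : Type*} [AddCommGroup E] [Module R E] (gE : ℤ → AddSubgroup E) : Prop :=
  ∀ (M : Type v) [AddCommGroup M] [Module R M] (gM : ℤ → AddSubgroup M),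
    IsLSG gR gM →
    ∀ P : Submodule R M, IsSGSubmodule gM P →
      (∀ x : M ⧸ P, IsTorsionElem gR x) →
      ∀ f : P →ₗ[R] E, (∀ n : ℤ, ∀ x : P, (x : M) ∈ gM n → f x ∈ gE n) →
        ∃ g : M →ₗ[R] E, (∀ x : P, g (x : M) = f x) ∧
          ∀ n : ℤ, ∀ x ∈ gM n, g x ∈ gE n

end SG

/-! The image under `π` of the two-sided SG ideal `R_{≥t}` is a two-sided SG ideal of `S`
containing every `S_k`, `k ≥ t`, so `(S_{≥t})ⁿ ⊆ π((R_{≥t})ⁿ)`. This kills the cokernel of `j`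
outright, and for the kernel an element of `(S_{≥t})ⁿ` lifts to `(R_{≥t})ⁿ` up to an element
of `J`, where condition (*) applies. -/

namespace SG

open DirectSum

section Homogeneous

variable {R M : Type*} [Ring R] [AddCommGroup M] [Module R M]
  {gM : ℤ → AddSubgroup M} [Decomposition gM]

theorem isSGSubmodule_iff_isHomogeneous {P : Submodule R M} :
    IsSGSubmodule gM P ↔ SetLike.IsHomogeneous gM P := by
  constructor
  · intro hP i x hx
    rw [← Submodule.mem_toAddSubgroup, hP] at hx
    induction hx using AddSubgroup.iSup_induction' with
    | hp m y hy =>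
      by_cases him : m = i
      · subst him
        rw [decompose_of_mem_same gM hy.1]
        exact hy.2
      · rw [decompose_of_mem_ne gM hy.1 him]
        exact P.zero_mem
    | h1 => simp
    | hadd a b _ _ ha hb =>
      rw [decompose_add, DirectSum.add_apply, AddSubgroup.coe_add]
      exact P.add_mem ha hb
  · intro hP
    refine le_antisymm (fun x hx => ?_) (iSup_le fun _ => inf_le_right)
    classical
    rw [← sum_support_decompose gM x]
    exact AddSubgroup.sum_mem _ fun i _ =>
      AddSubgroup.mem_iSup_of_mem i ⟨(decompose gM x i).2, hP i hx⟩

theorem isSGSubmodule_sInf {T : Set (Submodule R M)} (hT : ∀ P ∈ T, IsSGSubmodule gM P) :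
    IsSGSubmodule gM (sInf T) := by
  rw [isSGSubmodule_iff_isHomogeneous]
  intro i x hx
  simp only [Submodule.mem_sInf] at hx ⊢
  exact fun P hP => isSGSubmodule_iff_isHomogeneous.mp (hT P hP) i (hx P hP)

end Homogeneous

section Ideals

variable {R S : Type*} [Ring R] [Ring S]

theorem isSGSubmodule_geIdeal (gR : ℤ → AddSubgroup R) [Decomposition gR] (t : ℕ) :
    IsSGSubmodule gR (geIdeal gR t) :=
  isSGSubmodule_sInf fun _ hP => hP.1

theorem isTwoSided_geIdeal (gR : ℤ → AddSubgroup R) (t : ℕ) : IsTwoSided (geIdeal gR t) := by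
  intro x hx r
  simp only [geIdeal, Submodule.mem_sInf] at hx ⊢
  exact fun P hP => hP.2.1 x (hx P hP) r

theorem IsTwoSided.idealPow {I : Ideal R} (hI : IsTwoSided I) :
    ∀ m : ℕ, IsTwoSided (idealPow I m)
  | 0 => fun _ _ _ => trivial
  | m + 1 => by
    intro x hx r
    suffices Submodule.span R ((I : Set R) * (SG.idealPow I m : Set R)) ≤
        Submodule.comap (LinearMap.toSpanSingleton R R r) (SG.idealPow I (m + 1)) from this hx
    refine Submodule.span_le.2 ?_
    rintro _ ⟨p, hp, q, hq, rfl⟩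
    show p * q * r ∈ SG.idealPow I (m + 1)
    rw [mul_assoc]
    exact Submodule.subset_span (Set.mul_mem_mul hp (hI.idealPow m q hq r))

theorem IsTwoSided.map {π : R →+* S} (hπ : Function.Surjective π) {I : Ideal R}
    (hI : IsTwoSided I) : IsTwoSided (I.map π) := by
  intro x hx s
  obtain ⟨a, ha, rfl⟩ := (Ideal.mem_map_iff_of_surjective π hπ).1 hx
  obtain ⟨b, rfl⟩ := hπ s
  rw [← map_mul]
  exact Ideal.mem_map_of_mem π (hI a ha b)

variable {gR : ℤ → AddSubgroup R} {gS : ℤ → AddSubgroup S} {π : R →+* S}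

theorem IsSGSubmodule.map (hπ : Function.Surjective π)
    (hgS : ∀ k : ℤ, gS k = (gR k).map π.toAddMonoidHom) {P : Ideal R}
    (hP : IsSGSubmodule gR P) : IsSGSubmodule gS (P.map π) := by
  refine le_antisymm (fun x hx => ?_) (iSup_le fun _ => inf_le_right)
  obtain ⟨p, hp, rfl⟩ := (Ideal.mem_map_iff_of_surjective π hπ).1 hx
  rw [← Submodule.mem_toAddSubgroup, hP] at hp
  clear hx
  induction hp using AddSubgroup.iSup_induction' with
  | hp m y hy =>
    refine AddSubgroup.mem_iSup_of_mem m ⟨?_, Ideal.mem_map_of_mem π hy.2⟩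
    rw [hgS m]
    exact AddSubgroup.mem_map_of_mem _ hy.1
  | h1 => simp
  | hadd a b _ _ ha hb =>
    rw [map_add]
    exact AddSubgroup.add_mem _ ha hb

theorem geIdeal_le_map [Decomposition gR] (hπ : Function.Surjective π)
    (hgS : ∀ k : ℤ, gS k = (gR k).map π.toAddMonoidHom) (t : ℕ) :
    geIdeal gS t ≤ (geIdeal gR t).map π := by
  refine sInf_le ⟨(isSGSubmodule_geIdeal gR t).map hπ hgS,
    (isTwoSided_geIdeal gR t).map hπ, fun k hk x hx => ?_⟩
  rw [hgS k] at hx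
  obtain ⟨a, ha, rfl⟩ := hx
  refine Ideal.mem_map_of_mem π ?_
  simp only [geIdeal, Submodule.mem_sInf]
  exact fun P hP => hP.2.2 k hk ha

theorem idealPow_mono {A B : Ideal R} (hAB : A ≤ B) : ∀ m : ℕ, idealPow A m ≤ idealPow B m
  | 0 => le_rfl
  | m + 1 => Submodule.span_mono (Set.mul_subset_mul hAB (idealPow_mono hAB m))

theorem idealPow_map_le (hπ : Function.Surjective π) (A : Ideal R) :
    ∀ m : ℕ, idealPow (A.map π) m ≤ (idealPow A m).map π
  | 0 => fun x _ => by
    obtain ⟨a, rfl⟩ := hπ x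
    exact Ideal.mem_map_of_mem π trivial
  | m + 1 => by
    refine Submodule.span_le.2 ?_
    rintro _ ⟨u, hu, v, hv, rfl⟩
    obtain ⟨a, ha, rfl⟩ := (Ideal.mem_map_iff_of_surjective π hπ).1 hu
    obtain ⟨b, hb, rfl⟩ := (Ideal.mem_map_iff_of_surjective π hπ).1 (idealPow_map_le hπ A m hv)
    show π a * π b ∈ _
    rw [← map_mul]
    exact Ideal.mem_map_of_mem π (Submodule.subset_span (Set.mul_mem_mul ha hb))

theorem idealPow_geIdeal_le_map [Decomposition gR] (hπ : Function.Surjective π)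
    (hgS : ∀ k : ℤ, gS k = (gR k).map π.toAddMonoidHom) (t m : ℕ) :
    idealPow (geIdeal gS t) m ≤ (idealPow (geIdeal gR t) m).map π :=
  (idealPow_mono (geIdeal_le_map hπ hgS t) m).trans (idealPow_map_le hπ _ m)

end Ideals

end SG

/-- `R/J` is modelled by a surjective ring homomorphism `π : R → S` with kernel `J`; torsion
of the cokernel and of the kernel of `j` is stated elementwise, `S` acting on `I/JI`
through representatives. -/
theorem stmt_14_general {R S : Type*} [Ring R] [Ring S]
    (gR : ℤ → AddSubgroup R) (gS : ℤ → AddSubgroup S)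
    (hR : SG.IsSGRing gR)
    (π : R →+* S) (hπ : Function.Surjective π)
    (hgS : ∀ k : ℤ, gS k = (gR k).map π.toAddMonoidHom)
    (t n : ℕ) :
    (∀ s : S, ∃ t' n' : ℕ, ∀ y ∈ SG.idealPow (SG.geIdeal gS t') n',
        y * s ∈ Submodule.span S (π '' (SG.idealPow (SG.geIdeal gR t) n : Set R))) ∧
    (SG.CondStar gR (RingHom.ker π) →
      ∀ x ∈ SG.idealPow (SG.geIdeal gR t) n ⊓ RingHom.ker π,
        ∃ t' n' : ℕ, ∀ r : R, π r ∈ SG.idealPow (SG.geIdeal gS t') n' →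
          r * x ∈ Submodule.span R
            ((RingHom.ker π : Set R) * (SG.idealPow (SG.geIdeal gR t) n : Set R))) := by
  let := hR.1.chooseDecomposition
  have hpow := SG.idealPow_geIdeal_le_map hπ hgS
  refine ⟨fun s => ⟨t, n, fun y hy => ?_⟩, fun hstar x hx => ?_⟩
  · exact ((SG.isTwoSided_geIdeal gR t).idealPow n).map hπ y (hpow t n hy) s
  · obtain ⟨nx, tx, hJI⟩ := hstar n t x ⟨hx.2, hx.1⟩
    refine ⟨tx, nx, fun r hr => ?_⟩
    obtain ⟨a, ha, hπa⟩ := (Ideal.mem_map_iff_of_surjective π hπ).1 (hpow tx nx hr)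
    have hra : r - a ∈ RingHom.ker π := by rw [RingHom.mem_ker, map_sub, hπa, sub_self]
    rw [← sub_add_cancel r a, add_mul]
    exact Submodule.add_mem _ (Submodule.subset_span (Set.mul_mem_mul hra hx.1)) (hJI a ha)

/-- for `I = (R_{≥t})ⁿ` and the induced map `j : I/JI → R/J`,
the cokernel of `j` is torsion, and if `J` satisfies condition (*) then the kernel of `j`
is torsion.  `R/J` is modelled by a surjective ring homomorphism `π : R → S` with SG
kernel; torsion is stated elementwise: the cokernel condition says every `s ∈ S` is sent
into the image `π(I)` by some power `(S_{≥t'})^{n'}`, and the kernel condition says every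
`x ∈ I ⊓ J` is sent into `J·I` by some power `(S_{≥t'})^{n'}` (acting through
representatives). -/
theorem stmt_14 {R S : Type*} [Ring R] [Ring S]
    (gR : ℤ → AddSubgroup R) (gS : ℤ → AddSubgroup S)
    (hR : SG.IsSGRing gR) (hpos : ∀ k : ℤ, k < 0 → gR k = ⊥)
    (hnoe : IsNoetherian R R)
    (π : R →+* S) (hπ : Function.Surjective π)
    (hgS : ∀ k : ℤ, gS k = (gR k).map π.toAddMonoidHom)
    (hJsg : SG.IsSGSubmodule gR (RingHom.ker π))
    (hcomp : π '' SG.Rprime gR = SG.Rprime gS)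
    (t n : ℕ) :
    (∀ s : S, ∃ t' n' : ℕ, ∀ y ∈ SG.idealPow (SG.geIdeal gS t') n',
        y * s ∈ Submodule.span S (π '' (SG.idealPow (SG.geIdeal gR t) n : Set R))) ∧
    (SG.CondStar gR (RingHom.ker π) →
      ∀ x ∈ SG.idealPow (SG.geIdeal gR t) n ⊓ RingHom.ker π,
        ∃ t' n' : ℕ, ∀ r : R, π r ∈ SG.idealPow (SG.geIdeal gS t') n' →
          r * x ∈ Submodule.span R
            ((RingHom.ker π : Set R) * (SG.idealPow (SG.geIdeal gR t) n : Set R))) :=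
  stmt_14_general gR gS hR π hπ hgS t n
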